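/- arXiv:1909.13349 — 3 statements merged into one kernel-verified Lean document; each statement's English description precedes it below -/
import Mathlib

section
/- Suppose α < β and the separation X_{βα}(t) := X_β(t) − X_α(t) satisfies the differential equation Ẋ_{βα}(t) = ψ_{βα} − κ ∫_{X_α(t)}^{X_β(t)} ∫_Ω φ(y − X_γ(t)) dm_γ dy with X_{βα}(0) = β − α > 0, where φ ≥ 0 and ψ_{βα} := ψ₀(β) − ψ₀(α) < 0. Then X_{βα}(t) ≤ (β − α) + t·ψ_{βα} for all t in the interval of existence on which X_{βα} ≥ 0; in particular X_{βα} reaches 0 by time (β − α)/(−ψ_{βα}). -/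
open MeasureTheory Set intervalIntegral

/-- If `ψ_{βα} < 0`, the separation of the two trajectories decreases at least linearly,
so the trajectories cross by time `(β−α)/(−ψ_{βα})`. -/
theorem separation_upper_bound_crossing
    (Ω : Set ℝ) (hΩbdd : Bornology.IsBounded Ω)
    (m : Measure ℝ) [IsFiniteMeasure m] (hm : m (Ωᶜ) = 0)
    (κ T : ℝ) (hκ : 0 < κ) (hT : 0 < T)
    (φ : ℝ → ℝ) (hφ : MeasureTheory.LocallyIntegrable φ) (hφ0 : ∀ x, 0 ≤ φ x)
    (X : ℝ → ℝ → ℝ) (α β : ℝ) (hαβ : α < β)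
    (hX0 : X α 0 = α ∧ X β 0 = β)
    (ψβα : ℝ) (hψ : ψβα < 0)
    (hode : ∀ t ∈ Ico (0:ℝ) T,
      HasDerivAt (fun τ => X β τ - X α τ)
        (ψβα - κ * ∫ y in (X α t)..(X β t), (∫ γ, φ (y - X γ t) ∂m)) t) :
    (∀ t ∈ Ico (0:ℝ) T, (∀ s ∈ Icc (0:ℝ) t, X α s ≤ X β s) →
      X β t - X α t ≤ (β - α) + t * ψβα) ∧
    ((∀ t ∈ Ico (0:ℝ) T, X α t ≤ X β t) → T ≤ (β - α) / (-ψβα)) := by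
  have main : ∀ t ∈ Ico (0:ℝ) T, (∀ s ∈ Icc (0:ℝ) t, X α s ≤ X β s) →
      X β t - X α t ≤ (β - α) + t * ψβα := by
    rintro t ⟨ht0, htT⟩ hord
    -- g τ = (X β τ - X α τ) - ψβα * τ is antitone on [0,t]
    set g : ℝ → ℝ := fun τ => (X β τ - X α τ) - ψβα * τ with hg
    have hsub : Icc (0:ℝ) t ⊆ Ico 0 T := fun s hs =>
      ⟨hs.1, lt_of_le_of_lt hs.2 htT⟩
    have hgderiv : ∀ s ∈ Icc (0:ℝ) t,
        HasDerivAt g ((ψβα - κ * ∫ y in (X α s)..(X β s), (∫ γ, φ (y - X γ s) ∂m)) - ψβα) s := by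
      intro s hs
      exact (hode s (hsub hs)).sub ((hasDerivAt_id s).const_mul ψβα |>.congr_deriv (by ring))
    have hanti : AntitoneOn g (Icc 0 t) := by
      apply antitoneOn_of_deriv_nonpos (convex_Icc 0 t)
      · intro s hs
        exact ((hgderiv s hs).continuousAt).continuousWithinAt
      · intro s hs
        rw [interior_Icc] at hs
        exact ((hgderiv s ⟨hs.1.le, hs.2.le⟩).differentiableAt).differentiableWithinAt
      · intro s hs
        rw [interior_Icc] at hs
        have hs' : s ∈ Icc (0:ℝ) t := ⟨hs.1.le, hs.2.le⟩
        rw [(hgderiv s hs').deriv]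
        have hXord : X α s ≤ X β s := hord s hs'
        have hI : 0 ≤ ∫ y in (X α s)..(X β s), (∫ γ, φ (y - X γ s) ∂m) := by
          apply intervalIntegral.integral_nonneg hXord
          intro y _
          exact MeasureTheory.integral_nonneg fun γ => hφ0 _
        nlinarith
    have h0t : (0:ℝ) ∈ Icc (0:ℝ) t := ⟨le_refl _, ht0⟩
    have htt : t ∈ Icc (0:ℝ) t := ⟨ht0, le_refl _⟩
    have := hanti h0t htt ht0
    simp only [hg, mul_zero, sub_zero, hX0.1, hX0.2] at this
    linarith
  refine ⟨main, ?_⟩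
  intro hord
  by_contra h
  push_neg at h
  set t0 : ℝ := (β - α) / (-ψβα) with ht0
  have hψ' : (0:ℝ) < -ψβα := by linarith
  have ht0nn : 0 ≤ t0 := div_nonneg (by linarith) hψ'.le
  set t' : ℝ := (t0 + T) / 2 with ht'
  have ht'lt : t0 < t' := by
    have : t0 < T := h
    simp only [ht']; linarith
  have ht'T : t' < T := by
    have : t0 < T := h
    simp only [ht']; linarith
  have ht'nn : 0 ≤ t' := le_trans ht0nn ht'lt.le
  have hmem : t' ∈ Ico (0:ℝ) T := ⟨ht'nn, ht'T⟩
  have hbound := main t' hmem (fun s hs => hord s ⟨hs.1, lt_of_le_of_lt hs.2 ht'T⟩)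
  have hpos : X α t' ≤ X β t' := hord t' hmem
  have ht0eq : t0 * (-ψβα) = β - α := div_mul_cancel₀ _ hψ'.ne'
  nlinarith
end

section
/- Let φ : ℝ → [0,∞) be even, radially decreasing, and bounded, let m be a finite nonnegative measure supported on a bounded set, M₀ = m(ℝ), and κ > 0. Suppose for each pair α < β in Ω the separation X_{βα}(t) = X_β(t) − X_α(t) satisfies Ẋ_{βα} = ψ_{βα} − κ ∫_{X_α}^{X_β} ∫_Ω φ(y − X_γ) dm_γ dy with trajectories preserving order, and ψ_{βα} ≥ 0. Then for all t ≥ 0: X_{βα}(t) ≥ (β−α) e^{−κ‖φ‖_∞ M₀ t} + (ψ_{βα}/(κ‖φ‖_∞ M₀))(1 − e^{−κ‖φ‖_∞ M₀ t}). -/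
/-!
Write `Z = X_β - X_α`. The kernel is bounded by `C` and `m` has mass `M₀`, so the inner integral is
at most `C M₀` and the nested integral at most `C M₀ Z` (the trajectories stay ordered). Hence
`Z' ≥ ψ_{βα} - κ C M₀ Z`, and Grönwall's inequality applied to `-Z` gives the explicit bound.
-/

open Set intervalIntegral MeasureTheory Real

theorem integral_le_const_mul_measureReal_univ {α : Type*} [MeasurableSpace α] {μ : Measure α}
    [IsFiniteMeasure μ] {f : α → ℝ} {C : ℝ} (hC : 0 ≤ C) (hf : ∀ x, f x ≤ C) :
    ∫ x, f x ∂μ ≤ C * μ.real univ := by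
  by_cases hint : Integrable f μ
  · calc ∫ x, f x ∂μ ≤ ∫ _, C ∂μ := integral_mono hint (integrable_const C) hf
      _ = C * μ.real univ := by rw [MeasureTheory.integral_const, smul_eq_mul, mul_comm]
  · rw [integral_undef hint]
    positivity

theorem intervalIntegral_le_const_mul_sub {f : ℝ → ℝ} {a b K : ℝ} (hab : a ≤ b) (hK : 0 ≤ K)
    (hf : ∀ y ∈ Icc a b, f y ≤ K) :
    ∫ y in a..b, f y ≤ K * (b - a) := by
  by_cases hint : IntervalIntegrable f volume a b
  · calc ∫ y in a..b, f y ≤ ∫ _ in a..b, K := integral_mono_on hab hint intervalIntegrable_const hf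
      _ = K * (b - a) := by rw [intervalIntegral.integral_const, smul_eq_mul, mul_comm]
  · rw [intervalIntegral.integral_undef hint]
    exact mul_nonneg hK (sub_nonneg.2 hab)

theorem le_of_deriv_right_ge_sub_mul {f f' : ℝ → ℝ} {δ K ε a b : ℝ} (hK : K ≠ 0)
    (hf : ContinuousOn f (Icc a b)) (hf' : ∀ x ∈ Ico a b, HasDerivWithinAt f (f' x) (Ici x) x)
    (ha : δ ≤ f a) (bound : ∀ x ∈ Ico a b, ε - K * f x ≤ f' x) :
    ∀ x ∈ Icc a b, δ * exp (-K * (x - a)) + ε / K * (1 - exp (-K * (x - a))) ≤ f x := by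
  intro x hx
  have bound_neg : ∀ x ∈ Ico a b, -f' x ≤ -K * -f x + -ε := fun x hx => by
    linarith [bound x hx]
  have h := le_gronwallBound_of_liminf_deriv_right_le hf.neg
    (fun x hx _ hr => (hf' x hx).neg.liminf_right_slope_le hr) (neg_le_neg ha) bound_neg x hx
  rw [gronwallBound_of_K_ne_0 (neg_ne_zero.2 hK), neg_div_neg_eq] at h
  simp only [Pi.neg_apply] at h
  linarith

theorem separation_lower_bound_bounded_kernel_general
    (φ : ℝ → ℝ)
    (C : ℝ) (hC : 0 < C) (hφbd : ∀ x, φ x ≤ C)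
    (m : Measure ℝ) [IsFiniteMeasure m]
    (M₀ : ℝ) (hM₀ : M₀ = (m Set.univ).toReal) (hM₀pos : 0 < M₀)
    (κ : ℝ) (hκ : 0 < κ)
    (ψ : ℝ → ℝ) (X : ℝ → ℝ → ℝ)
    (α β : ℝ)
    (hX0 : X α 0 = α ∧ X β 0 = β)
    (hord : ∀ t ∈ Ici (0:ℝ), X α t ≤ X β t)
    (hode : ∀ t ∈ Ici (0:ℝ),
      HasDerivAt (fun τ => X β τ - X α τ)
        ((ψ β - ψ α) - κ * ∫ y in (X α t)..(X β t), (∫ γ, φ (y - X γ t) ∂m)) t) :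
    ∀ t ∈ Ici (0:ℝ),
      X β t - X α t ≥ (β - α) * exp (-(κ * C * M₀) * t)
        + (ψ β - ψ α) / (κ * C * M₀) * (1 - exp (-(κ * C * M₀) * t)) := by
  intro t ht
  have inner_le : ∀ s y, ∫ γ, φ (y - X γ s) ∂m ≤ C * M₀ := fun s y => by
    rw [hM₀]
    exact integral_le_const_mul_measureReal_univ hC.le fun γ => hφbd _
  have deriv_ge : ∀ s ∈ Ico 0 t, (ψ β - ψ α) - κ * C * M₀ * (X β s - X α s)
      ≤ (ψ β - ψ α) - κ * ∫ y in (X α s)..(X β s), (∫ γ, φ (y - X γ s) ∂m) := by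
    intro s hs
    have nested_le := intervalIntegral_le_const_mul_sub (hord s hs.1) (by positivity)
      fun y _ => inner_le s y
    linarith [mul_le_mul_of_nonneg_left nested_le hκ.le]
  have h := le_of_deriv_right_ge_sub_mul (f := fun τ => X β τ - X α τ) (δ := β - α)
    (by positivity) (fun s hs => (hode s hs.1).continuousAt.continuousWithinAt)
    (fun s hs => (hode s hs.1).hasDerivWithinAt) (by simp [hX0]) deriv_ge t ⟨ht, le_rfl⟩
  simpa using h

/-- Explicit lower bound on the separation of trajectories for a bounded kernel:
`X_{βα}(t) ≥ (β−α) e^{−κ‖φ‖_∞ M₀ t} + (ψ_{βα}/(κ‖φ‖_∞ M₀))(1 − e^{−κ‖φ‖_∞ M₀ t})`. -/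
theorem separation_lower_bound_bounded_kernel
    (φ : ℝ → ℝ) (hφ0 : ∀ x, 0 ≤ φ x) (hφeven : ∀ x, φ (-x) = φ x)
    (hφdec : AntitoneOn φ (Ici 0))
    (C : ℝ) (hC : 0 < C) (hφbd : ∀ x, φ x ≤ C)
    (Ω : Set ℝ) (hΩbdd : Bornology.IsBounded Ω)
    (m : Measure ℝ) [IsFiniteMeasure m] (hm : m (Ωᶜ) = 0)
    (M₀ : ℝ) (hM₀ : M₀ = (m Set.univ).toReal) (hM₀pos : 0 < M₀)
    (κ : ℝ) (hκ : 0 < κ)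
    (ψ : ℝ → ℝ) (X : ℝ → ℝ → ℝ)
    (α β : ℝ) (hα : α ∈ Ω) (hβ : β ∈ Ω) (hαβ : α < β)
    (hX0 : X α 0 = α ∧ X β 0 = β)
    (hψ : 0 ≤ ψ β - ψ α)
    (hord : ∀ t ∈ Ici (0:ℝ), X α t ≤ X β t)
    (hode : ∀ t ∈ Ici (0:ℝ),
      HasDerivAt (fun τ => X β τ - X α τ)
        ((ψ β - ψ α) - κ * ∫ y in (X α t)..(X β t), (∫ γ, φ (y - X γ t) ∂m)) t) :
    ∀ t ∈ Ici (0:ℝ),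
      X β t - X α t ≥ (β - α) * exp (-(κ * C * M₀) * t)
        + (ψ β - ψ α) / (κ * C * M₀) * (1 - exp (-(κ * C * M₀) * t)) :=
  separation_lower_bound_bounded_kernel_general φ C hC hφbd m M₀ hM₀ hM₀pos κ hκ ψ X α β hX0 hord
    hode
end

section
/- (Example of blowup with nonnegative e₀ on the support) Let φ : ℝ → [0,∞) be even, radially decreasing, continuous, and κ, ε, δ > 0. Define Ω₊ = (δ, 1/2 + δ), Ω₋ = (−1/2 − δ, −δ), Ω = Ω₊ ∪ Ω₋, ρ₀ = 1_Ω, u₀ = −ε on Ω₊ and u₀ = +ε on Ω₋, and ψ₀ = u₀ + κΦ*ρ₀ with Φ(x) = ∫₀ˣ φ. Then ψ₀(δ⁺) − ψ₀((−δ)⁻) = −2ε + κ ∫_{−δ}^{δ} ∫_Ω φ(y − γ) dγ dy. In particular, if κ ∫_{−δ}^{δ} ∫_Ω φ(y − γ) dγ dy < 2ε, then ψ₀ is not monotonically increasing on Ω, even though ∂_x u₀ + κφ*ρ₀ > 0 everywhere on Ω. -/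
open scoped Classical

open Set intervalIntegral MeasureTheory Filter Topology

/-!
Write `F x = ∫_Ω Φ(x - γ) dγ`, a continuous function. Fubini gives
`F δ - F (-δ) = ∫_{-δ}^{δ} φ*ρ₀`, so the one-sided limits `ε + κ F(-δ)` of `ψ₀` at `(-δ)⁻` and
`-ε + κ F δ` at `δ⁺` differ by `-2ε + κ ∫_{-δ}^{δ} φ*ρ₀`; when this is negative, `ψ₀` jumps down
across the gap between `Ω₋` and `Ω₊` and cannot be monotone on `Ω`.
-/

theorem not_monotoneOn_of_tendsto_nhdsLT_of_tendsto_nhdsGT {α β : Type*} [LinearOrder α]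
    [TopologicalSpace α] [OrderTopology α] [DenselyOrdered α] [NoMinOrder α] [NoMaxOrder α]
    [LinearOrder β] [TopologicalSpace β] [OrderClosedTopology β] {f : α → β} {s : Set α}
    {a b : α} {l r : β} (hab : a ≤ b) (hl : Tendsto f (𝓝[<] a) (𝓝 l))
    (hr : Tendsto f (𝓝[>] b) (𝓝 r)) (hsa : s ∈ 𝓝[<] a) (hsb : s ∈ 𝓝[>] b)
    (hrl : r < l) :
    ¬ MonotoneOn f s := by
  intro hf
  refine hrl.not_ge (ge_of_tendsto hr ?_)
  filter_upwards [hsb, self_mem_nhdsWithin] with y hys hby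
  refine le_of_tendsto hl ?_
  filter_upwards [hsa, self_mem_nhdsWithin] with x hxs hxa
  exact hf hxs hys (hxa.trans (hab.trans_lt hby)).le

section Convolution

-- `s` is only needed up to a null set; this lets a bounded open set be replaced by its closure.
variable {s t : Set ℝ} (ht : IsCompact t) (hst : s =ᵐ[volume] t)
include ht hst

theorem continuous_setIntegral_comp_sub {f : ℝ → ℝ} (hf : Continuous f) :
    Continuous fun x => ∫ γ in s, f (x - γ) := by
  simp only [setIntegral_congr_set hst]
  exact continuous_parametric_integral_of_continuous (by fun_prop) ht

theorem setIntegral_comp_sub_pos {f : ℝ → ℝ} (hf : Continuous f) (hfpos : ∀ x, 0 < f x)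
    (hs : 0 < volume s) (x : ℝ) : 0 < ∫ γ in s, f (x - γ) := by
  have hint : IntegrableOn (fun γ => f (x - γ)) s :=
    (ContinuousOn.integrableOn_compact ht (by fun_prop)).congr_set_ae hst
  rw [setIntegral_pos_iff_support_of_nonneg_ae (ae_of_all _ fun γ => (hfpos _).le) hint]
  have hsupp : Function.support (fun γ => f (x - γ)) = univ :=
    eq_univ_of_forall fun γ => (hfpos (x - γ)).ne'
  rwa [hsupp, univ_inter]

theorem integral_setIntegral_comp_sub_swap {f : ℝ → ℝ} (hf : Continuous f) {a b : ℝ}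
    (hab : a ≤ b) :
    ∫ γ in s, ∫ y in a..b, f (y - γ) = ∫ y in a..b, ∫ γ in s, f (y - γ) := by
  simp only [setIntegral_congr_set hst, integral_of_le hab]
  refine integral_integral_swap ?_
  rw [Measure.prod_restrict]
  exact ((ContinuousOn.integrableOn_compact (ht.prod isCompact_Icc) (by fun_prop)).mono_set
    (prod_mono le_rfl Ioc_subset_Icc_self))

theorem setIntegral_primitive_comp_sub_sub {φ : ℝ → ℝ} (hφ : Continuous φ) {a b : ℝ}
    (hab : a ≤ b) :
    (∫ γ in s, ∫ y in (0:ℝ)..b - γ, φ y) - ∫ γ in s, ∫ y in (0:ℝ)..a - γ, φ y =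
      ∫ y in a..b, ∫ γ in s, φ (y - γ) := by
  have hΦ : Continuous fun x => ∫ y in (0:ℝ)..x, φ y :=
    continuous_primitive (fun _ _ => hφ.intervalIntegrable _ _) 0
  have hint (c : ℝ) : IntegrableOn (fun γ => ∫ y in (0:ℝ)..c - γ, φ y) s :=
    (ContinuousOn.integrableOn_compact ht (by fun_prop)).congr_set_ae hst
  rw [← integral_sub (hint b) (hint a), ← integral_setIntegral_comp_sub_swap ht hst hφ hab]
  congr 1 with γ
  rw [integral_interval_sub_left (hφ.intervalIntegrable _ _) (hφ.intervalIntegrable _ _),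
    integral_comp_sub_right]

end Convolution

theorem example_nonnegative_e0_blowup_general
    (φ : ℝ → ℝ) (hφpos : ∀ x, 0 < φ x) (hφcont : Continuous φ)
    (κ ε δ : ℝ) (hκ : 0 < κ) (hδ : 0 < δ)
    (Φ : ℝ → ℝ) (hΦ : ∀ x : ℝ, Φ x = ∫ y in (0:ℝ)..x, φ y)
    (Ωp Ωm Ω : Set ℝ)
    (hΩp : Ωp = Ioo δ (1/2 + δ)) (hΩm : Ωm = Ioo (-(1/2) - δ) (-δ))
    (hΩ : Ω = Ωp ∪ Ωm)
    (u₀ : ℝ → ℝ)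
    (hu₀ : ∀ x : ℝ, u₀ x = if x ∈ Ωp then -ε else if x ∈ Ωm then ε else 0)
    (ψ₀ : ℝ → ℝ)
    (hψ₀ : ∀ x : ℝ, ψ₀ x = u₀ x + κ * ∫ γ in Ω, Φ (x - γ)) :
    ((-ε + κ * ∫ γ in Ω, Φ (δ - γ)) - (ε + κ * ∫ γ in Ω, Φ (-δ - γ))
        = -(2 * ε) + κ * ∫ y in (-δ)..δ, (∫ γ in Ω, φ (y - γ))) ∧
    ((κ * ∫ y in (-δ)..δ, (∫ γ in Ω, φ (y - γ))) < 2 * ε → ¬ MonotoneOn ψ₀ Ω) ∧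
    (∀ x ∈ Ω, 0 < κ * ∫ γ in Ω, φ (x - γ)) := by
  obtain rfl : Φ = fun x => ∫ y in (0:ℝ)..x, φ y := funext hΦ
  set K : Set ℝ := Icc δ (1/2 + δ) ∪ Icc (-(1/2) - δ) (-δ)
  have hK : IsCompact K := isCompact_Icc.union isCompact_Icc
  have hΩK : Ω =ᵐ[volume] K := by
    rw [hΩ, hΩp, hΩm]
    exact Ioo_ae_eq_Icc.union Ioo_ae_eq_Icc
  set F := fun x => ∫ γ in Ω, ∫ y in (0:ℝ)..x - γ, φ y
  have hF : Continuous F := continuous_setIntegral_comp_sub hK hΩK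
    (continuous_primitive (fun _ _ => hφcont.intervalIntegrable _ _) 0)
  have hjump : F δ - F (-δ) = ∫ y in (-δ)..δ, ∫ γ in Ω, φ (y - γ) :=
    setIntegral_primitive_comp_sub_sub hK hΩK hφcont (by linarith)
  have hΩm_mem : Ωm ∈ 𝓝[<] (-δ) := hΩm ▸ Ioo_mem_nhdsLT (by linarith)
  have hΩp_mem : Ωp ∈ 𝓝[>] δ := hΩp ▸ Ioo_mem_nhdsGT (by linarith)
  refine ⟨by linear_combination κ * hjump, fun hsmall => ?_, fun x _ => mul_pos hκ ?_⟩
  · have hleft : Tendsto ψ₀ (𝓝[<] (-δ)) (𝓝 (ε + κ * F (-δ))) := by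
      refine (((hF.tendsto _).const_mul κ).const_add ε).mono_left nhdsWithin_le_nhds |>.congr' ?_
      filter_upwards [hΩm_mem] with x hx
      have hx' : x ∉ Ωp := fun h => by rw [hΩp] at h; rw [hΩm] at hx; linarith [h.1, hx.2]
      rw [hψ₀, hu₀, if_neg hx', if_pos hx]
    have hright : Tendsto ψ₀ (𝓝[>] δ) (𝓝 (-ε + κ * F δ)) := by
      refine (((hF.tendsto _).const_mul κ).const_add (-ε)).mono_left nhdsWithin_le_nhds |>.congr' ?_
      filter_upwards [hΩp_mem] with x hx
      rw [hψ₀, hu₀, if_pos hx]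
    refine not_monotoneOn_of_tendsto_nhdsLT_of_tendsto_nhdsGT (neg_le_self hδ.le) hleft hright
      (mem_of_superset hΩm_mem (hΩ ▸ subset_union_right))
      (mem_of_superset hΩp_mem (hΩ ▸ subset_union_left)) ?_
    rw [← hjump] at hsmall
    linarith
  · refine setIntegral_comp_sub_pos hK hΩK hφcont hφpos ?_ x
    calc (0 : ENNReal) < volume Ωp := by simp [hΩp]
      _ ≤ volume Ω := measure_mono (hΩ ▸ subset_union_left)

/-- Example: two separated blocks of density moving toward one another.  Even though
`e₀ = ∂_x u₀ + κ φ*ρ₀ > 0` everywhere on `Ω`, the conserved quantity `ψ₀` fails to be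
monotonically increasing on `Ω` when the gap `2δ` is small enough. -/
theorem example_nonnegative_e0_blowup
    (φ : ℝ → ℝ) (hφpos : ∀ x, 0 < φ x) (hφeven : ∀ x, φ (-x) = φ x)
    (hφdec : AntitoneOn φ (Ici 0)) (hφcont : Continuous φ)
    (κ ε δ : ℝ) (hκ : 0 < κ) (hε : 0 < ε) (hδ : 0 < δ)
    (Φ : ℝ → ℝ) (hΦ : ∀ x : ℝ, Φ x = ∫ y in (0:ℝ)..x, φ y)
    (Ωp Ωm Ω : Set ℝ)
    (hΩp : Ωp = Ioo δ (1/2 + δ)) (hΩm : Ωm = Ioo (-(1/2) - δ) (-δ))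
    (hΩ : Ω = Ωp ∪ Ωm)
    (u₀ : ℝ → ℝ)
    (hu₀ : ∀ x : ℝ, u₀ x = if x ∈ Ωp then -ε else if x ∈ Ωm then ε else 0)
    (ψ₀ : ℝ → ℝ)
    (hψ₀ : ∀ x : ℝ, ψ₀ x = u₀ x + κ * ∫ γ in Ω, Φ (x - γ)) :
    ((-ε + κ * ∫ γ in Ω, Φ (δ - γ)) - (ε + κ * ∫ γ in Ω, Φ (-δ - γ))
        = -(2 * ε) + κ * ∫ y in (-δ)..δ, (∫ γ in Ω, φ (y - γ))) ∧
    ((κ * ∫ y in (-δ)..δ, (∫ γ in Ω, φ (y - γ))) < 2 * ε → ¬ MonotoneOn ψ₀ Ω) ∧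
    (∀ x ∈ Ω, 0 < κ * ∫ γ in Ω, φ (x - γ)) :=
  example_nonnegative_e0_blowup_general φ hφpos hφcont κ ε δ hκ hδ Φ hΦ Ωp Ωm Ω hΩp hΩm hΩ u₀ hu₀ ψ₀
    hψ₀
end
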